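/- arXiv:1112.5507 — 2 statements merged into one kernel-verified Lean document; each statement's English description precedes it below -/
import Mathlib

section
/- Let n ≥ 1, let A and B be n×n real matrices that are adjacency matrices of simple graphs (i.e., symmetric, with zero diagonal, and all entries in {0,1}), and suppose the graphs are isomorphic, i.e., there exists an n×n permutation matrix P₀ with A = P₀ B P₀ᵀ. Then the minimum over all n×n doubly stochastic matrices D of the relaxed QAP objective −tr(Aᵀ D B Dᵀ) equals the minimum over all n×n permutation matrices P of the QAP objective −tr(Aᵀ P B Pᵀ); both minima equal −tr(Aᵀ A). -/
open Matrix

lemma permMat_DS {n : ℕ} (P : Matrix (Fin n) (Fin n) ℝ)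
    (h : ∃ σ : Equiv.Perm (Fin n), ∀ u v, P u v = if v = σ u then 1 else 0) :
    (∀ u v, 0 ≤ P u v) ∧ (∀ u, ∑ v, P u v = 1) ∧ (∀ v, ∑ u, P u v = 1) := by
  obtain ⟨σ, hσ⟩ := h
  refine ⟨fun u v => by rw [hσ]; positivity, fun u => ?_, fun v => ?_⟩
  · simp [hσ]
  · have : ∀ u : Fin n, P u v = if u = σ.symm v then 1 else 0 := by
      intro u; rw [hσ]
      by_cases h : u = σ.symm v
      · simp [h]
      · rw [if_neg h, if_neg (fun hv => h (by simp [hv]))]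
    simp [this]

lemma key_bound {n : ℕ} (A B D : Matrix (Fin n) (Fin n) ℝ)
    (hA01 : ∀ u v, A u v = 0 ∨ A u v = 1)
    (hB0 : ∀ u v, 0 ≤ B u v) (hB1 : ∀ u v, B u v ≤ 1)
    (hD0 : ∀ u v, 0 ≤ D u v) (hDr : ∀ u, ∑ v, D u v = 1) :
    (Aᵀ * D * B * Dᵀ).trace ≤ (Aᵀ * A).trace := by
  have hM : ∀ i j, (D * B * Dᵀ) i j ≤ 1 := by
    intro i j
    have : (D * B * Dᵀ) i j = ∑ l, (∑ k, D i k * B k l) * D j l := by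
      simp [Matrix.mul_apply, Matrix.transpose_apply]
    rw [this]
    calc ∑ l, (∑ k, D i k * B k l) * D j l
        ≤ ∑ l, (∑ k, D i k * 1) * D j l := by
          apply Finset.sum_le_sum; intro l _
          apply mul_le_mul_of_nonneg_right _ (hD0 j l)
          apply Finset.sum_le_sum; intro k _
          exact mul_le_mul_of_nonneg_left (hB1 k l) (hD0 i k)
      _ = ∑ l, D j l := by simp [hDr i]
      _ = 1 := hDr j
  have htr : (Aᵀ * D * B * Dᵀ).trace = ∑ i, ∑ j, A j i * (D * B * Dᵀ) j i := by
    have : Aᵀ * D * B * Dᵀ = Aᵀ * (D * B * Dᵀ) := by simp only [mul_assoc]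
    rw [this]
    simp [Matrix.trace, Matrix.diag, Matrix.mul_apply, Matrix.transpose_apply]
  have htr2 : (Aᵀ * A).trace = ∑ i, ∑ j, A j i * A j i := by
    simp [Matrix.trace, Matrix.diag, Matrix.mul_apply, Matrix.transpose_apply]
  rw [htr, htr2]
  apply Finset.sum_le_sum; intro i _
  apply Finset.sum_le_sum; intro j _
  rcases hA01 j i with h | h
  · simp [h]
  · simpa [h] using hM j i

/-- If `A` and `B` are adjacency matrices of simple graphs (symmetric, hollow,
0-1 entries) that are isomorphic via a permutation matrix `P₀` (i.e. `A = P₀ B P₀ᵀ`), then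
the minimum over doubly stochastic matrices `D` of `−tr(Aᵀ D B Dᵀ)` equals the minimum over
permutation matrices `P` of `−tr(Aᵀ P B Pᵀ)`; both minima equal `−tr(Aᵀ A)`. -/
theorem rQAP_min_eq_QAP_min (n : ℕ) (hn : 1 ≤ n) (A B : Matrix (Fin n) (Fin n) ℝ)
    (hAsym : Aᵀ = A) (hAdiag : ∀ u, A u u = 0) (hA01 : ∀ u v, A u v = 0 ∨ A u v = 1)
    (hBsym : Bᵀ = B) (hBdiag : ∀ u, B u u = 0) (hB01 : ∀ u v, B u v = 0 ∨ B u v = 1)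
    (P₀ : Matrix (Fin n) (Fin n) ℝ)
    (hP₀ : ∃ σ : Equiv.Perm (Fin n), ∀ u v, P₀ u v = if v = σ u then 1 else 0)
    (hiso : A = P₀ * B * P₀ᵀ) :
    IsLeast {x : ℝ | ∃ D : Matrix (Fin n) (Fin n) ℝ,
        ((∀ u v, 0 ≤ D u v) ∧ (∀ u, ∑ v, D u v = 1) ∧ (∀ v, ∑ u, D u v = 1)) ∧
        x = -(Aᵀ * D * B * Dᵀ).trace} (-(Aᵀ * A).trace) ∧
    IsLeast {x : ℝ | ∃ P : Matrix (Fin n) (Fin n) ℝ,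
        (∃ σ : Equiv.Perm (Fin n), ∀ u v, P u v = if v = σ u then 1 else 0) ∧
        x = -(Aᵀ * P * B * Pᵀ).trace} (-(Aᵀ * A).trace) := by
  have hB0 : ∀ u v, 0 ≤ B u v := fun u v => by rcases hB01 u v with h | h <;> simp [h]
  have hB1 : ∀ u v, B u v ≤ 1 := fun u v => by rcases hB01 u v with h | h <;> simp [h]
  have hval : -(Aᵀ * P₀ * B * P₀ᵀ).trace = -(Aᵀ * A).trace := by
    have : Aᵀ * P₀ * B * P₀ᵀ = Aᵀ * (P₀ * B * P₀ᵀ) := by simp only [mul_assoc]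
    rw [this, ← hiso]
  have hlb : ∀ x ∈ {x : ℝ | ∃ D : Matrix (Fin n) (Fin n) ℝ,
      ((∀ u v, 0 ≤ D u v) ∧ (∀ u, ∑ v, D u v = 1) ∧ (∀ v, ∑ u, D u v = 1)) ∧
      x = -(Aᵀ * D * B * Dᵀ).trace}, -(Aᵀ * A).trace ≤ x := by
    rintro x ⟨D, ⟨hD0, hDr, _⟩, rfl⟩
    exact neg_le_neg (key_bound A B D hA01 hB0 hB1 hD0 hDr)
  constructor
  · exact ⟨⟨P₀, permMat_DS P₀ hP₀, hval.symm⟩, hlb⟩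
  · refine ⟨⟨P₀, hP₀, hval.symm⟩, ?_⟩
    rintro x ⟨P, hP, rfl⟩
    obtain ⟨h0, hr, hc⟩ := permMat_DS P hP
    exact hlb _ ⟨P, ⟨h0, hr, hc⟩, rfl⟩
end

section
/- Let n ≥ 1, let A and B be n×n real matrices that are symmetric, have zero diagonal, and have all entries in {0,1}, and suppose A = P₀ B P₀ᵀ for some n×n permutation matrix P₀. Then for every n×n doubly stochastic matrix D, tr(Aᵀ D B Dᵀ) ≤ tr(Aᵀ A). -/
open Matrix

/-- If `A` and `B` are symmetric, hollow, 0-1 matrices with `A = P₀ B P₀ᵀ` for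
some permutation matrix `P₀`, then for every doubly stochastic matrix `D`,
`tr(Aᵀ D B Dᵀ) ≤ tr(Aᵀ A)`. -/
theorem rQAP_objective_bounded (n : ℕ) (hn : 1 ≤ n) (A B : Matrix (Fin n) (Fin n) ℝ)
    (hAsym : Aᵀ = A) (hAdiag : ∀ u, A u u = 0) (hA01 : ∀ u v, A u v = 0 ∨ A u v = 1)
    (hBsym : Bᵀ = B) (hBdiag : ∀ u, B u u = 0) (hB01 : ∀ u v, B u v = 0 ∨ B u v = 1)
    (P₀ : Matrix (Fin n) (Fin n) ℝ)
    (hP₀ : ∃ σ : Equiv.Perm (Fin n), ∀ u v, P₀ u v = if v = σ u then 1 else 0)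
    (hiso : A = P₀ * B * P₀ᵀ)
    (D : Matrix (Fin n) (Fin n) ℝ)
    (hDpos : ∀ u v, 0 ≤ D u v) (hDrow : ∀ u, ∑ v, D u v = 1) (hDcol : ∀ v, ∑ u, D u v = 1) :
    (Aᵀ * D * B * Dᵀ).trace ≤ (Aᵀ * A).trace := by
  have hAnn : ∀ u v, 0 ≤ A u v := by
    intro u v; rcases hA01 u v with h | h <;> rw [h] <;> norm_num
  have hBle : ∀ u v, B u v ≤ 1 := by
    intro u v; rcases hB01 u v with h | h <;> rw [h] <;> norm_num
  have hM : ∀ u v, (D * B * Dᵀ) u v ≤ 1 := by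
    intro u v
    have hexp : (D * B * Dᵀ) u v = ∑ l, (∑ k, D u k * B k l) * D v l := by
      simp [Matrix.mul_apply, Matrix.transpose_apply]
    rw [hexp]
    calc ∑ l, (∑ k, D u k * B k l) * D v l
        ≤ ∑ l, (∑ k, D u k * 1) * D v l := by
          apply Finset.sum_le_sum
          intro l _
          apply mul_le_mul_of_nonneg_right _ (hDpos v l)
          apply Finset.sum_le_sum
          intro k _
          exact mul_le_mul_of_nonneg_left (hBle k l) (hDpos u k)
      _ = 1 := by
          simp only [mul_one, ← Finset.sum_mul, hDrow u, one_mul]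
          exact hDrow v
  have hL : (Aᵀ * D * B * Dᵀ).trace = ∑ i, ∑ j, A j i * (D * B * Dᵀ) j i := by
    have : Aᵀ * D * B * Dᵀ = Aᵀ * (D * B * Dᵀ) := by
      rw [Matrix.mul_assoc, Matrix.mul_assoc, Matrix.mul_assoc]
    rw [this]
    simp [Matrix.trace, Matrix.diag, Matrix.mul_apply, Matrix.transpose_apply]
  have hR : (Aᵀ * A).trace = ∑ i, ∑ j, A j i * 1 := by
    simp only [Matrix.trace, Matrix.diag, Matrix.mul_apply, Matrix.transpose_apply, mul_one]
    apply Finset.sum_congr rfl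
    intro i _
    apply Finset.sum_congr rfl
    intro j _
    rcases hA01 j i with h | h <;> rw [h] <;> ring
  rw [hL, hR]
  apply Finset.sum_le_sum
  intro i _
  apply Finset.sum_le_sum
  intro j _
  exact mul_le_mul_of_nonneg_left (hM j i) (hAnn j i)
end
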